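/- Let X be a topological space and let A ⊆ X be a dense subset such that A, with the subspace topology, is a Choquet space. Then player N has a winning strategy in the Banach–Mazur game BM(X, A): there is a strategy for N, choosing the non-empty open sets with odd index, such that every play U_0 ⊇ U_1 ⊇ U_2 ⊇ ⋯ consistent with this strategy satisfies A ∩ ⋂_n U_n ≠ ∅. -/

import Mathlib

open Set

variable {X : Type*}

/-- Positions in the Choquet game on `X` consistent with the strategy `σ` of player `N`
(the "nonempty" player): a position is recorded as the list of player `E`'s moves so far,
most recent first.  Player `E` starts the game with an arbitrary nonempty open set, and each
subsequent move of `E` must be a nonempty open subset of `N`'s answer `σ l` to the previous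
position `l`. -/
inductive ChoquetPos [TopologicalSpace X] (σ : List (Set X) → Set X) : List (Set X) → Prop
  | single (U : Set X) : IsOpen U → U.Nonempty → ChoquetPos σ [U]
  | cons (U : Set X) (l : List (Set X)) : ChoquetPos σ l → IsOpen U → U.Nonempty →
      U ⊆ σ l → ChoquetPos σ (U :: l)

/-- The list of the first `n+1` moves of player `E` in a run `e`, most recent first. -/
def choquetHist (e : ℕ → Set X) : ℕ → List (Set X)
  | 0 => [e 0]
  | n + 1 => e (n + 1) :: choquetHist e n

/-- `σ` is a winning strategy for player `N` (the nonempty player) in the Choquet game on `X`: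
at every position reachable against `σ`, the answer `σ l` is a legal move (a nonempty open
subset of `E`'s last move), and for every infinite run of the game in which `E` plays legally
and `N` follows `σ`, the intersection of all moves played is nonempty (since the moves
decrease, this intersection equals `⋂ n, e n` where `e` enumerates `E`'s moves). -/
def IsWinningChoquetStrategy [TopologicalSpace X] (σ : List (Set X) → Set X) : Prop :=
  (∀ l, ChoquetPos σ l → IsOpen (σ l) ∧ (σ l).Nonempty ∧ ∀ U ∈ l.head?, σ l ⊆ U) ∧
  (∀ e : ℕ → Set X, (∀ n, ChoquetPos σ (choquetHist e n)) → (⋂ n, e n).Nonempty)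

/-- A topological space is Choquet if player `N` has a winning strategy in the Choquet game. -/
def IsChoquet (X : Type*) [TopologicalSpace X] : Prop :=
  ∃ σ : List (Set X) → Set X, IsWinningChoquetStrategy σ

/-- `σ` is a winning strategy for player `N` in the Banach–Mazur game `BM(X, A)`: the game is
played exactly like the Choquet game (player `E` starts, the players alternately choose
nonempty open sets, each contained in the previous one), but player `N` wins a run if `A`
meets the intersection of all moves played. -/
def IsWinningBanachMazurStrategy [TopologicalSpace X] (A : Set X)
    (σ : List (Set X) → Set X) : Prop :=
  (∀ l, ChoquetPos σ l → IsOpen (σ l) ∧ (σ l).Nonempty ∧ ∀ U ∈ l.head?, σ l ⊆ U) ∧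
  (∀ e : ℕ → Set X, (∀ n, ChoquetPos σ (choquetHist e n)) → (A ∩ ⋂ n, e n).Nonempty)

/-! Restriction `U ↦ A ∩ U` turns plays of `BM(X, A)` into plays of the Choquet game on `A`:
by density of `A`, the trace of a nonempty open set of `X` is nonempty and open in `A`.
Player `N` answers a position in `X` by an open set of `X` whose trace on `A` is the answer of
a winning Choquet strategy `τ` on `A` to the restricted position (cut down to `E`'s last move to
keep the play decreasing). Every run of `BM(X, A)` against this strategy then restricts to a run
against `τ`, so its intersection meets `A`. -/

open Set.Notation

lemma choquetHist_comp {Y : Type*} (f : Set X → Set Y) (e : ℕ → Set X) (n : ℕ) :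
    choquetHist (f ∘ e) n = (choquetHist e n).map f := by
  induction n with
  | zero => rfl
  | succ n ih => simp [choquetHist, ih]

section

variable [TopologicalSpace X] {A : Set X}

lemma Dense.preimage_val_nonempty (hA : Dense A) {U : Set X} (hU : IsOpen U)
    (hne : U.Nonempty) : (A ↓∩ U).Nonempty := by
  obtain ⟨x, hxU, hxA⟩ := hA.inter_open_nonempty U hU hne
  exact ⟨⟨x, hxA⟩, hxU⟩

lemma ChoquetPos.isOpen_headI {σ : List (Set X) → Set X} {l : List (Set X)}
    (hl : ChoquetPos σ l) : IsOpen l.headI := by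
  cases hl with
  | single U hU _ => exact hU
  | cons U _ _ hU _ _ => exact hU

/-- An open set of `X` whose trace on `A` is `W`, when `W` is open in `A`. -/
noncomputable def openExtension (W : Set A) : Set X :=
  open Classical in
  if h : IsOpen W then (isOpen_induced_iff.mp h).choose else ∅

lemma isOpen_openExtension (W : Set A) : IsOpen (openExtension W) := by
  unfold openExtension
  split_ifs with h
  exacts [(isOpen_induced_iff.mp h).choose_spec.1, isOpen_empty]

lemma preimage_val_openExtension {W : Set A} (hW : IsOpen W) : A ↓∩ openExtension W = W := by
  simp only [openExtension, dif_pos hW]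
  exact (isOpen_induced_iff.mp hW).choose_spec.2

noncomputable def liftStrategy (τ : List (Set A) → Set A) (l : List (Set X)) : Set X :=
  openExtension (τ (l.map (A ↓∩ ·))) ∩ l.headI

lemma liftStrategy_subset_of_mem_head? (τ : List (Set A) → Set A) {l : List (Set X)} {U : Set X}
    (hU : U ∈ l.head?) : liftStrategy τ l ⊆ U := by
  cases l with
  | nil => cases hU
  | cons V l =>
    cases Option.some_injective _ hU
    exact inter_subset_right

section

variable {τ : List (Set A) → Set A} (hτ : IsWinningChoquetStrategy τ)
include hτ

lemma ChoquetPos.map_preimage_val (hA : Dense A) {l : List (Set X)}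
    (hl : ChoquetPos (liftStrategy τ) l) : ChoquetPos τ (l.map (A ↓∩ ·)) := by
  induction hl with
  | single U hU hne =>
    exact .single _ (hU.preimage continuous_subtype_val) (hA.preimage_val_nonempty hU hne)
  | cons U l _ hU hne hsub ih =>
    refine .cons _ _ ih (hU.preimage continuous_subtype_val)
      (hA.preimage_val_nonempty hU hne) ?_
    rw [← preimage_val_openExtension (hτ.1 _ ih).1]
    exact preimage_mono fun x hx => (hsub hx).1

lemma preimage_val_liftStrategy (hA : Dense A) {l : List (Set X)}
    (hl : ChoquetPos (liftStrategy τ) l) :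
    A ↓∩ liftStrategy τ l = τ (l.map (A ↓∩ ·)) := by
  obtain ⟨hopen, -, hsub⟩ := hτ.1 _ (hl.map_preimage_val hτ hA)
  cases l with
  | nil => cases hl
  | cons U l =>
    rw [liftStrategy, preimage_inter, preimage_val_openExtension hopen]
    exact inter_eq_left.mpr (hsub _ rfl)

lemma isWinningBanachMazurStrategy_liftStrategy (hA : Dense A) :
    IsWinningBanachMazurStrategy A (liftStrategy τ) := by
  refine ⟨fun l hl => ⟨(isOpen_openExtension _).inter hl.isOpen_headI, ?_, ?_⟩, fun e he => ?_⟩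
  · obtain ⟨a, ha⟩ := (hτ.1 _ (hl.map_preimage_val hτ hA)).2.1
    rw [← preimage_val_liftStrategy hτ hA hl] at ha
    exact ⟨a, ha⟩
  · exact fun U => liftStrategy_subset_of_mem_head? τ
  · obtain ⟨a, ha⟩ := hτ.2 ((A ↓∩ ·) ∘ e) fun n => by
      rw [choquetHist_comp]
      exact (he n).map_preimage_val hτ hA
    exact ⟨a, a.2, mem_iInter.mpr fun n => mem_iInter.mp ha n⟩

end

end

/-- Let `X` be a topological space and let `A ⊆ X` be a dense subset such that
`A`, with the subspace topology, is a Choquet space.  Then player `N` has a winning strategy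
in the Banach–Mazur game `BM(X, A)`. -/
theorem statement_9 {X : Type*} [TopologicalSpace X] (A : Set X) (hdense : Dense A)
    (hA : IsChoquet ↥A) :
    ∃ σ : List (Set X) → Set X, IsWinningBanachMazurStrategy A σ :=
  let ⟨_, hτ⟩ := hA
  ⟨_, isWinningBanachMazurStrategy_liftStrategy hτ hdense⟩
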